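/- arXiv:1711.05324 — 2 statements merged into one kernel-verified Lean document; each statement's English description precedes it below -/
import Mathlib

section
/- With the setup of the previous statement (𝒮 a sparsity subspace of block lower triangular matrices, YX nilpotent for all X ∈ 𝒮), if 𝒮 is quadratically invariant with respect to Y then h(𝒮, Y) = -𝒮, i.e., the map L ↦ -L(I - YL)^{-1} is a bijection from 𝒮 onto 𝒮 with inverse Q ↦ Q(I + YQ)^{-1}. -/
/-!
Let `f L = L (1 - Y L)⁻¹` and `g Q = Q (Y Q + 1)⁻¹`. Since `Y L` is nilpotent, `(1 - Y L)⁻¹` is the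
finite geometric sum `∑ (Y L)ⁱ`, so `f L = ∑ L (Y L)ⁱ`; quadratic invariance puts every term
`L (Y L)ⁱ` in `𝒮`, hence `f` maps `𝒮` into `𝒮`, and so does `g`, as `g Q = Q (1 - Y (-Q))⁻¹` with `-Q ∈ 𝒮`.
The push-through identity `Y L (1 - Y L)⁻¹ + 1 = (1 - Y L)⁻¹` shows that `f` and `g` are mutually
inverse, so `f` is a bijection of `𝒮`, and `-f` maps `𝒮` onto `-𝒮`.
-/

open Matrix Pointwise

/-- Boolean matrix product: (X·Z)(i,j) = 1 iff ∃ k, X(i,k)=1 ∧ Z(k,j)=1. -/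
def bmul {α β γ : Type} [Fintype β] (X : Matrix α β Bool) (Z : Matrix β γ Bool) :
    Matrix α γ Bool :=
  fun i j => decide (∃ k, X i k = true ∧ Z k j = true)

/-- Entrywise order on binary matrices. -/
def ble {α β : Type} (X Y : Matrix α β Bool) : Prop :=
  ∀ i j, X i j = true → Y i j = true

/-- Support pattern of a real matrix. -/
noncomputable def struct {α β : Type} (Y : Matrix α β ℝ) : Matrix α β Bool :=
  fun i j => decide (Y i j ≠ 0)

/-- Sparsity subspace of a binary matrix. -/
def sparse {α β : Type} (X : Matrix α β Bool) : Set (Matrix α β ℝ) :=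
  {Y | ∀ i j, X i j = false → Y i j = 0}

/-- Boolean matrix power. -/
def bpow {α : Type} [Fintype α] [DecidableEq α] (Z : Matrix α α Bool) :
    ℕ → Matrix α α Bool
  | 0 => fun i j => decide (i = j)
  | k + 1 => bmul (bpow Z k) Z

open Finset

def IsQuadInvariant {R m n : Type*} [Semiring R] [Fintype m] [Fintype n]
    (S : Submodule R (Matrix m n R)) (Y : Matrix n m R) : Prop :=
  ∀ L ∈ S, ∀ L' ∈ S, L * Y * L' ∈ S

def sparseSubmodule {α β : Type} (X : Matrix α β Bool) : Submodule ℝ (Matrix α β ℝ) where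
  carrier := sparse X
  add_mem' {A B} hA hB i j hij := by simp [hA i j hij, hB i j hij]
  zero_mem' _ _ _ := rfl
  smul_mem' c A hA i j hij := by simp [hA i j hij]

section

variable {R m n : Type*} [CommRing R] [Fintype m] [Fintype n] [DecidableEq n]

theorem Matrix.inv_one_sub_eq_geom_sum {N : Matrix n n R} {k : ℕ} (hk : N ^ k = 0) :
    (1 - N)⁻¹ = ∑ i ∈ range k, N ^ i :=
  inv_eq_right_inv (by rw [mul_neg_geom_sum, hk, sub_zero])

theorem IsQuadInvariant.mul_mul_pow_mem {S : Submodule R (Matrix m n R)} {Y : Matrix n m R}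
    (hS : IsQuadInvariant S Y) {L Q : Matrix m n R} (hL : L ∈ S) (hQ : Q ∈ S) :
    ∀ k : ℕ, L * (Y * Q) ^ k ∈ S
  | 0 => by simpa using hL
  | k + 1 => by
    rw [pow_succ, ← Matrix.mul_assoc, ← Matrix.mul_assoc]
    exact hS _ (hS.mul_mul_pow_mem hL hQ k) _ hQ

theorem IsQuadInvariant.mul_inv_one_sub_mem {S : Submodule R (Matrix m n R)} {Y : Matrix n m R}
    (hS : IsQuadInvariant S Y) {L Q : Matrix m n R} (hL : L ∈ S) (hQ : Q ∈ S)
    (hnil : IsNilpotent (Y * Q)) : L * (1 - Y * Q)⁻¹ ∈ S := by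
  obtain ⟨k, hk⟩ := hnil
  rw [inv_one_sub_eq_geom_sum hk, Matrix.mul_sum]
  exact S.sum_mem fun i _ => hS.mul_mul_pow_mem hL hQ i

theorem Matrix.mul_mul_inv_one_sub_add_one {L : Matrix m n R} {Y : Matrix n m R}
    (h : IsUnit (1 - Y * L).det) : Y * (L * (1 - Y * L)⁻¹) + 1 = (1 - Y * L)⁻¹ :=
  calc Y * (L * (1 - Y * L)⁻¹) + 1
      = (Y * L + (1 - Y * L)) * (1 - Y * L)⁻¹ := by
        rw [Matrix.add_mul, mul_nonsing_inv _ h, Matrix.mul_assoc]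
    _ = (1 - Y * L)⁻¹ := by rw [add_sub_cancel, Matrix.one_mul]

theorem Matrix.one_sub_mul_mul_inv_add_one {Q : Matrix m n R} {Y : Matrix n m R}
    (h : IsUnit (Y * Q + 1).det) : 1 - Y * (Q * (Y * Q + 1)⁻¹) = (Y * Q + 1)⁻¹ :=
  calc 1 - Y * (Q * (Y * Q + 1)⁻¹)
      = ((Y * Q + 1) - Y * Q) * (Y * Q + 1)⁻¹ := by
        rw [Matrix.sub_mul, mul_nonsing_inv _ h, Matrix.mul_assoc]
    _ = (Y * Q + 1)⁻¹ := by rw [add_sub_cancel_left, Matrix.one_mul]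

theorem Matrix.mul_inv_one_sub_mul_inv_add_one {L : Matrix m n R} {Y : Matrix n m R}
    (h : IsUnit (1 - Y * L).det) :
    L * (1 - Y * L)⁻¹ * (Y * (L * (1 - Y * L)⁻¹) + 1)⁻¹ = L := by
  rw [mul_mul_inv_one_sub_add_one h, nonsing_inv_nonsing_inv _ h,
    nonsing_inv_mul_cancel_right _ _ h]

theorem Matrix.mul_inv_add_one_mul_inv_one_sub {Q : Matrix m n R} {Y : Matrix n m R}
    (h : IsUnit (Y * Q + 1).det) :
    Q * (Y * Q + 1)⁻¹ * (1 - Y * (Q * (Y * Q + 1)⁻¹))⁻¹ = Q := by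
  rw [one_sub_mul_mul_inv_add_one h, nonsing_inv_nonsing_inv _ h,
    nonsing_inv_mul_cancel_right _ _ h]

end

theorem stmt7 {m p : ℕ} (Sb : Matrix (Fin m) (Fin p) Bool) (Y : Matrix (Fin p) (Fin m) ℝ)
    (hnil : ∀ X ∈ sparse Sb, IsNilpotent (Y * X))
    (hQI : ∀ L ∈ sparse Sb, ∀ L' ∈ sparse Sb, L * Y * L' ∈ sparse Sb) :
    ((fun L : Matrix (Fin m) (Fin p) ℝ => -(L * (1 - Y * L)⁻¹)) '' sparse Sb = -(sparse Sb)) ∧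
    Set.BijOn (fun L : Matrix (Fin m) (Fin p) ℝ => L * (1 - Y * L)⁻¹) (sparse Sb) (sparse Sb) ∧
    (∀ L ∈ sparse Sb,
      (L * (1 - Y * L)⁻¹ : Matrix (Fin m) (Fin p) ℝ) *
        ((Y * (L * (1 - Y * L)⁻¹ : Matrix (Fin m) (Fin p) ℝ) + 1 : Matrix (Fin p) (Fin p) ℝ))⁻¹ = L) := by
  set S := sparseSubmodule Sb
  have hS : IsQuadInvariant S Y := hQI
  set f := fun L : Matrix (Fin m) (Fin p) ℝ => L * (1 - Y * L)⁻¹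
  set g := fun Q : Matrix (Fin m) (Fin p) ℝ => Q * (Y * Q + 1)⁻¹
  have hf : Set.MapsTo f S S := fun L hL => hS.mul_inv_one_sub_mem hL hL (hnil L hL)
  have hg : Set.MapsTo g S S := fun Q hQ => by
    have hQ' : -Q ∈ S := S.neg_mem hQ
    have hsign : Y * Q + 1 = 1 - Y * -Q := by rw [Matrix.mul_neg, sub_neg_eq_add, add_comm]
    change Q * (Y * Q + 1)⁻¹ ∈ S
    rw [hsign]
    exact hS.mul_inv_one_sub_mem hQ hQ' (hnil _ hQ')
  have hinv : Set.InvOn g f S S :=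
    ⟨fun L hL => mul_inv_one_sub_mul_inv_add_one
        ((isUnit_iff_isUnit_det _).mp (hnil L hL).isUnit_one_sub),
      fun Q hQ => mul_inv_add_one_mul_inv_one_sub
        ((isUnit_iff_isUnit_det _).mp (hnil Q hQ).isUnit_add_one)⟩
  have hbij : Set.BijOn f S S := hinv.bijOn hf hg
  have himage : (Neg.neg ∘ f) '' S = -S := by
    rw [Set.image_comp, hbij.image_eq, Set.image_neg_eq_neg]
  exact ⟨himage, hbij, hinv.1⟩
end

section
/- Suppose the binary matrices Δ_g = Struct(C·A^g·B) (A ∈ ℝ^{n×n}) and Z ∈ {0,1}^{m×m} with Z ≥ I_m satisfy S·Δ_g·Z^r·S ≤ Z^{g+r+1}·S for all g ∈ [0, n-1] and all r ∈ [0, D], where D is the diameter of Z (least D with Z^{D+k} = Z^D for all k ≥ 0). Then S·Δ_v·Z^r·S ≤ Z^{v+r+1}·S for all natural numbers v and r. -/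
open Matrix Pointwise

/-!
By Cayley–Hamilton every power `A ^ v` is a linear combination of `A ^ g` with `g < n`, so every
nonzero entry of `C * A ^ v * B` is already a nonzero entry of some `C * A ^ g * B` with
`g < n`, `g ≤ v`. Since `Z ≥ I`, Boolean powers of `Z` increase with the exponent, and they are
constant from the diameter `D` on; hence the hypothesis for `(g, min r D)` gives the claim for
`(v, r)`.
-/

open Finset Polynomial

section CayleyHamilton

variable {R ι : Type*} [CommRing R] [Nontrivial R] [Fintype ι] [DecidableEq ι]

theorem Matrix.exists_pow_eq_sum_range_card (A : Matrix ι ι R) (v : ℕ) :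
    ∃ c : ℕ → R, A ^ v = ∑ g ∈ range (Fintype.card ι), c g • A ^ g := by
  rcases isEmpty_or_nonempty ι with _ | _
  · exact ⟨0, Subsingleton.elim _ _⟩
  refine ⟨(X ^ v %ₘ A.charpoly).coeff, ?_⟩
  rw [A.pow_eq_aeval_mod_charpoly, aeval_eq_sum_range']
  have hdeg : A.charpoly.natDegree = Fintype.card ι := A.charpoly_natDegree_eq_dim
  have hne : A.charpoly ≠ 1 := fun h1 =>
    Fintype.card_ne_zero (α := ι) (by simpa [h1] using hdeg.symm)
  exact hdeg ▸ natDegree_modByMonic_lt _ A.charpoly_monic hne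

theorem Matrix.mul_pow_mul_apply_eq_zero {κ μ : Type*} (A : Matrix ι ι R) (B : Matrix ι μ R)
    (C : Matrix κ ι R) (a : κ) (b : μ) (h : ∀ g < Fintype.card ι, (C * A ^ g * B) a b = 0)
    (v : ℕ) : (C * A ^ v * B) a b = 0 := by
  obtain ⟨c, hc⟩ := A.exists_pow_eq_sum_range_card v
  rw [hc, Matrix.mul_sum, Matrix.sum_mul, Matrix.sum_apply]
  refine Finset.sum_eq_zero fun g hg => ?_
  rw [Matrix.mul_smul, Matrix.smul_mul, Matrix.smul_apply, h g (mem_range.mp hg), smul_zero]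

end CayleyHamilton

theorem exists_struct_mul_pow_mul {ι κ μ : Type} [Fintype ι] [DecidableEq ι]
    (A : Matrix ι ι ℝ) (B : Matrix ι μ ℝ) (C : Matrix κ ι ℝ) {v : ℕ} {a : κ} {b : μ}
    (h : struct (C * A ^ v * B) a b = true) :
    ∃ g < Fintype.card ι, g ≤ v ∧ struct (C * A ^ g * B) a b = true := by
  rcases lt_or_ge v (Fintype.card ι) with hv | hv
  · exact ⟨v, hv, le_rfl, h⟩
  by_contra! hcon
  have hzero : ∀ g < Fintype.card ι, (C * A ^ g * B) a b = 0 := fun g hg => by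
    simpa [struct] using hcon g hg (by omega)
  simp [struct, Matrix.mul_pow_mul_apply_eq_zero A B C a b hzero v] at h

section Boolean

variable {α β γ δ ε : Type}

theorem ble_trans {X Y W : Matrix α β Bool} (hXY : ble X Y) (hYW : ble Y W) : ble X W :=
  fun i j hij => hYW i j (hXY i j hij)

theorem bmul_ble_bmul_left [Fintype β] {X Y : Matrix α β Bool} (hXY : ble X Y)
    (T : Matrix β γ Bool) : ble (bmul X T) (bmul Y T) := by
  simp only [ble, bmul, decide_eq_true_eq]
  rintro i j ⟨k, hX, hT⟩
  exact ⟨k, hXY i k hX, hT⟩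

/-- `hX` says `X ≤ ⨆ g, F g` entrywise; Boolean products distribute over such joins. -/
theorem ble_bmul_bmul_bmul_of_cover [Fintype β] [Fintype γ] [Fintype δ] {ι : Type*}
    {S : Matrix α β Bool} {X : Matrix β γ Bool} {Y : Matrix γ δ Bool} {T : Matrix δ ε Bool}
    {W : Matrix α ε Bool}
    (F : ι → Matrix β γ Bool) (hX : ∀ k l, X k l = true → ∃ g, F g k l = true)
    (hF : ∀ g, ble (bmul (bmul (bmul S (F g)) Y) T) W) :
    ble (bmul (bmul (bmul S X) Y) T) W := by
  intro i j hij
  simp only [bmul, decide_eq_true_eq] at hij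
  obtain ⟨k₃, ⟨k₂, ⟨k₁, hS, hXk⟩, hY⟩, hT⟩ := hij
  obtain ⟨g, hg⟩ := hX k₁ k₂ hXk
  refine hF g i j ?_
  simp only [bmul, decide_eq_true_eq]
  exact ⟨k₃, ⟨k₂, ⟨k₁, hS, hg⟩, hY⟩, hT⟩

variable [Fintype α] [DecidableEq α] {Z : Matrix α α Bool}

theorem bpow_mono (hdiag : ∀ i, Z i i = true) {a b : ℕ} (hab : a ≤ b) :
    ble (bpow Z a) (bpow Z b) := by
  induction b, hab using Nat.le_induction with
  | base => exact fun _ _ => id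
  | succ b _ ih =>
    intro i j hij
    simp only [bpow, bmul, decide_eq_true_eq]
    exact ⟨j, ih i j hij, hdiag j⟩

theorem bpow_eq_bpow_min {D : ℕ} (hD : ∀ k : ℕ, bpow Z (D + k) = bpow Z D) (r : ℕ) :
    bpow Z r = bpow Z (min r D) := by
  rcases le_total r D with hr | hr
  · rw [min_eq_left hr]
  · rw [min_eq_right hr, ← hD (r - D), Nat.add_sub_cancel' hr]

end Boolean

theorem stmt15_general {n m p : ℕ} (A : Matrix (Fin n) (Fin n) ℝ) (B : Matrix (Fin n) (Fin m) ℝ)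
    (C : Matrix (Fin p) (Fin n) ℝ) (S : Matrix (Fin m) (Fin p) Bool)
    (Z : Matrix (Fin m) (Fin m) Bool) (hdiag : ∀ i, Z i i = true)
    (D : ℕ) (hD : ∀ k : ℕ, bpow Z (D + k) = bpow Z D)
    (h : ∀ g r : ℕ, g < n → r ≤ D →
      ble (bmul (bmul (bmul S (struct (C * A ^ g * B))) (bpow Z r)) S)
        (bmul (bpow Z (g + r + 1)) S)) :
    ∀ v r : ℕ,
      ble (bmul (bmul (bmul S (struct (C * A ^ v * B))) (bpow Z r)) S)
        (bmul (bpow Z (v + r + 1)) S) := by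
  intro v r
  rw [bpow_eq_bpow_min hD r]
  refine ble_bmul_bmul_bmul_of_cover (fun g : {g // g < n ∧ g ≤ v} => struct (C * A ^ g.1 * B))
    (fun k l hkl => ?_) fun ⟨g, hgn, hgv⟩ => ?_
  · obtain ⟨g, hgn, hgv, hg⟩ := exists_struct_mul_pow_mul A B C hkl
    exact ⟨⟨g, by simpa using hgn, hgv⟩, hg⟩
  · exact ble_trans (h g _ hgn (min_le_right r D))
      (bmul_ble_bmul_left (bpow_mono hdiag (by omega)) S)

theorem stmt15 {n m p : ℕ} (A : Matrix (Fin n) (Fin n) ℝ) (B : Matrix (Fin n) (Fin m) ℝ)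
    (C : Matrix (Fin p) (Fin n) ℝ) (S : Matrix (Fin m) (Fin p) Bool)
    (Z : Matrix (Fin m) (Fin m) Bool) (hdiag : ∀ i, Z i i = true)
    (D : ℕ) (hD : ∀ k : ℕ, bpow Z (D + k) = bpow Z D)
    (hDmin : ∀ D' < D, ¬ ∀ k : ℕ, bpow Z (D' + k) = bpow Z D')
    (h : ∀ g r : ℕ, g < n → r ≤ D →
      ble (bmul (bmul (bmul S (struct (C * A ^ g * B))) (bpow Z r)) S)
        (bmul (bpow Z (g + r + 1)) S)) :
    ∀ v r : ℕ,
      ble (bmul (bmul (bmul S (struct (C * A ^ v * B))) (bpow Z r)) S)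
        (bmul (bpow Z (v + r + 1)) S) :=
  stmt15_general A B C S Z hdiag D hD h
end
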